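/- Agreement of the transaction-commit model: if δInit →TC* δ (reflexive-transitive closure of the TC transition relation starting from the all-Working initial state), then for all resource managers r1 and r2 it is not the case that δ r1 = Committed and δ r2 = Aborted. -/

import Mathlib

/-- The four states of a resource manager in the transaction-commit model. -/
inductive RMState where
  | working
  | prepared
  | committed
  | aborted
deriving DecidableEq

/-- Every resource manager is prepared or committed. -/
def CanCommit {RMs : Type} (δ : RMs → RMState) : Prop :=
  ∀ r', δ r' = RMState.prepared ∨ δ r' = RMState.committed

/-- No resource manager is committed. -/
def NotCommitted {RMs : Type} (δ : RMs → RMState) : Prop :=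
  ∀ r', δ r' ≠ RMState.committed

/-- The transition relation of the transaction-commit model. -/
inductive TCStep {RMs : Type} [DecidableEq RMs] :
    (RMs → RMState) → (RMs → RMState) → Prop where
  | prepare (δ : RMs → RMState) (r : RMs) (h : δ r = RMState.working) :
      TCStep δ (Function.update δ r RMState.prepared)
  | commit (δ : RMs → RMState) (r : RMs) (h : δ r = RMState.prepared)
      (hc : CanCommit δ) :
      TCStep δ (Function.update δ r RMState.committed)
  | abort (δ : RMs → RMState) (r : RMs)
      (h : δ r = RMState.working ∨ δ r = RMState.prepared)
      (hn : NotCommitted δ) :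
      TCStep δ (Function.update δ r RMState.aborted)

theorem Function.apply_eq_of_update_apply_eq {α β : Type*} [DecidableEq α] {f : α → β} {a a' : α}
    {b c : β} (h : Function.update f a b a' = c) (hbc : b ≠ c) : f a' = c := by
  rcases eq_or_ne a' a with rfl | hne
  · exact absurd (by simpa using h) hbc
  · rwa [Function.update_of_ne hne] at h

theorem CanCommit.ne_aborted {RMs : Type} {δ : RMs → RMState} (hc : CanCommit δ) (r : RMs) :
    δ r ≠ RMState.aborted := by
  rcases hc r with h | h <;> simp [h]

def Agreement {RMs : Type} (δ : RMs → RMState) : Prop :=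
  ∀ r1 r2 : RMs, ¬ (δ r1 = RMState.committed ∧ δ r2 = RMState.aborted)

/-- Agreement is an inductive invariant: a commit needs every manager prepared or committed, so
none is aborted, and an abort needs none committed. -/
theorem TCStep.agreement {RMs : Type} [DecidableEq RMs] {δ δ' : RMs → RMState}
    (hstep : TCStep δ δ') (hδ : Agreement δ) : Agreement δ' := by
  rintro r1 r2 ⟨h1, h2⟩
  cases hstep with
  | prepare r _ =>
    exact hδ r1 r2 ⟨Function.apply_eq_of_update_apply_eq h1 (by decide),
      Function.apply_eq_of_update_apply_eq h2 (by decide)⟩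
  | commit r _ hc =>
    exact hc.ne_aborted r2 (Function.apply_eq_of_update_apply_eq h2 (by decide))
  | abort r _ hn =>
    exact hn r1 (Function.apply_eq_of_update_apply_eq h1 (by decide))

theorem agreement_init {RMs : Type} : Agreement (fun _ : RMs => RMState.working) := by
  rintro r1 r2 ⟨h1, _⟩
  cases h1

/-- Agreement of the transaction-commit model: in any state reachable from the all-Working
initial state, no two resource managers decide differently. -/
theorem tc_agreement {RMs : Type} [DecidableEq RMs] (δ : RMs → RMState)
    (hreach : Relation.ReflTransGen TCStep (fun _ => RMState.working) δ) :
    ∀ r1 r2 : RMs, ¬ (δ r1 = RMState.committed ∧ δ r2 = RMState.aborted) := by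
  induction hreach with
  | refl => exact agreement_init
  | tail _ hstep ih => exact hstep.agreement ih
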